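/- arXiv:1809.06453 — 6 statements merged into one kernel-verified Lean document; each statement's English description precedes it below -/
import Mathlib

section
/- Let X be a nonempty complete metric space without isolated points. If a function f : X → ℝ is continuous at every point of a countable dense subset A of X, then there exists a point z ∈ X \ A at which f is continuous. -/
/-! The points of continuity of `f` form a Gδ set containing the dense set `A`, hence a
residual set. Without isolated points every singleton is nowhere dense, so the countable set
`A` is meagre. By the Baire category theorem the residual set of continuity points outside `A`
is dense, in particular nonempty. -/

open Filter Topology

theorem Set.Countable.compl_mem_residual {X : Type*} [TopologicalSpace X] [T1Space X]
    [∀ x : X, NeBot (𝓝[≠] x)] {s : Set X} (hs : s.Countable) : sᶜ ∈ residual X := by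
  have hsingle : ∀ a ∈ s, ({a}ᶜ : Set X) ∈ residual X := fun a _ ↦
    residual_of_dense_open isOpen_compl_singleton (dense_compl_singleton a)
  filter_upwards [(countable_bInter_mem hs).2 hsingle] with x hx hxs
    using Set.mem_iInter₂.1 hx x hxs rfl

theorem stmt0 {X : Type*} [MetricSpace X] [CompleteSpace X] [Nonempty X]
    (hX : ∀ x : X, Filter.NeBot (nhdsWithin x {x}ᶜ))
    (A : Set X) (hA : A.Countable) (hAd : Dense A)
    (f : X → ℝ) (hf : ∀ a ∈ A, ContinuousAt f a) :
    ∃ z, z ∉ A ∧ ContinuousAt f z := by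
  have hcont : {x | ContinuousAt f x} ∈ residual X :=
    residual_of_dense_Gδ (IsGδ.setOfPred_continuousAt f) (hAd.mono hf)
  have hgood : Aᶜ ∩ {x | ContinuousAt f x} ∈ residual X :=
    inter_mem hA.compl_mem_residual hcont
  exact (dense_of_mem_residual hgood).nonempty
end

section
/- Let X be a nonempty complete metric space without isolated points. If a function f : X → ℝ is continuous at every point of a countable dense subset of X, then the set of points of continuity of f is uncountable. -/
open Filter Topology

theorem isNowhereDense_singleton {X : Type*} [TopologicalSpace X] [T1Space X] (x : X)
    [NeBot (𝓝[≠] x)] : IsNowhereDense {x} := by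
  rw [IsNowhereDense, closure_singleton]
  exact interior_singleton x

theorem Set.Countable.isMeagre {X : Type*} [TopologicalSpace X] [T1Space X]
    (hX : ∀ x : X, NeBot (𝓝[≠] x)) {s : Set X} (hs : s.Countable) : IsMeagre s := by
  have hsingle : ∀ x ∈ s, IsMeagre ({x} : Set X) := fun x _ =>
    haveI := hX x
    (isNowhereDense_singleton x).isMeagre
  simpa using isMeagre_biUnion hs hsingle

theorem IsGδ.not_countable_of_dense {X : Type*} [TopologicalSpace X] [T1Space X] [BaireSpace X]
    [Nonempty X] (hX : ∀ x : X, NeBot (𝓝[≠] x)) {s : Set X} (hs : IsGδ s) (hd : Dense s) :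
    ¬ s.Countable := fun hc =>
  not_isMeagre_of_isGδ_of_dense hs hd (hc.isMeagre hX)

theorem stmt1_general {X : Type*} [MetricSpace X] [CompleteSpace X] [Nonempty X]
    (hX : ∀ x : X, Filter.NeBot (nhdsWithin x {x}ᶜ))
    (A : Set X) (hAd : Dense A)
    (f : X → ℝ) (hf : ∀ a ∈ A, ContinuousAt f a) :
    ¬ {x : X | ContinuousAt f x}.Countable :=
  (IsGδ.setOfPred_continuousAt f).not_countable_of_dense hX (hAd.mono hf)

theorem stmt1 {X : Type*} [MetricSpace X] [CompleteSpace X] [Nonempty X]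
    (hX : ∀ x : X, Filter.NeBot (nhdsWithin x {x}ᶜ))
    (A : Set X) (hA : A.Countable) (hAd : Dense A)
    (f : X → ℝ) (hf : ∀ a ∈ A, ContinuousAt f a) :
    ¬ {x : X | ContinuousAt f x}.Countable :=
  stmt1_general hX A hAd f hf
end

section
/- There is no function f : ℝ → ℝ that is continuous at every rational number and discontinuous at every irrational number. -/
/-!
The points of continuity of any function form a `Gδ` set. The rationals are not a `Gδ` subset
of `ℝ`: otherwise they and the irrationals would be two disjoint dense `Gδ` sets, contradicting
the Baire category theorem.
-/

open Filter

theorem not_isGδ_of_dense_of_compl_mem_residual {X : Type*} [TopologicalSpace X] [BaireSpace X]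
    [Nonempty X] {s : Set X} (hd : Dense s) (hc : sᶜ ∈ residual X) : ¬IsGδ s := fun hs =>
  let ⟨_, hx, hxc⟩ :=
    (dense_of_mem_residual (inter_mem (residual_of_dense_Gδ hs hd) hc)).nonempty
  hxc hx

theorem not_isGδ_range_ratCast : ¬IsGδ (Set.range ((↑) : ℚ → ℝ)) :=
  not_isGδ_of_dense_of_compl_mem_residual Rat.denseRange_cast eventually_residual_irrational

theorem stmt3 :
    ¬ ∃ f : ℝ → ℝ, ∀ x : ℝ, ContinuousAt f x ↔ ∃ q : ℚ, x = (q : ℝ) := by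
  rintro ⟨f, hf⟩
  have hcont : {x | ContinuousAt f x} = Set.range ((↑) : ℚ → ℝ) := by
    ext x
    simp [hf x, eq_comm]
  exact not_isGδ_range_ratCast (hcont ▸ IsGδ.setOfPred_continuousAt f)
end

section
/- Let X be a nonempty complete metric space without isolated points and let A ⊆ X be any countable subset. Then there exists a function g : X → ℝ whose set of discontinuity points is exactly A. -/
/-!
Enumerate `A` injectively by `f : A → ℕ` and put `g = 2 ^ (-f)` on `A`, `g = 0` off `A`. Then `g`
is summable, so `g → 0` along the cofinite filter. In a T1 space every punctured neighbourhood
filter is finer than the cofinite one, so `g` tends to `0` at every non-isolated point `x`;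
hence `g` is continuous at `x` exactly when `g x = 0`, i.e. when `x ∉ A`.
-/

open Filter Topology Set

theorem continuousAt_iff_eq_of_tendsto_cofinite {X Y : Type*} [TopologicalSpace X] [T1Space X]
    [TopologicalSpace Y] [T2Space Y] {g : X → Y} {y : Y} (hg : Tendsto g cofinite (𝓝 y))
    (x : X) [(𝓝[≠] x).NeBot] : ContinuousAt g x ↔ g x = y := by
  have hlim : Tendsto g (𝓝[≠] x) (𝓝 y) := hg.mono_left (nhdsNE_le_cofinite x)
  rw [← continuousWithinAt_compl_self]
  refine ⟨fun hc => tendsto_nhds_unique hc hlim, fun hx => ?_⟩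
  rwa [ContinuousWithinAt, hx]

theorem Set.Countable.exists_tendsto_cofinite_zero_support_eq {X : Type*} {A : Set X}
    (hA : A.Countable) : ∃ g : X → ℝ, Tendsto g cofinite (𝓝 0) ∧ Function.support g = A := by
  obtain ⟨f, hf⟩ := countable_iff_exists_injOn.mp hA
  refine ⟨A.indicator fun x => (1 / 2 : ℝ) ^ f x, ?_, ?_⟩
  · have hsum : Summable fun a : A => (1 / 2 : ℝ) ^ f a :=
      summable_geometric_two.comp_injective hf.injective
    exact (summable_subtype_iff_indicator.mp hsum).tendsto_cofinite_zero
  · rw [support_indicator, inter_eq_left]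
    exact fun x _ => pow_ne_zero _ (by norm_num)

theorem stmt11_general {X : Type*} [MetricSpace X]
    (hX : ∀ x : X, Filter.NeBot (nhdsWithin x {x}ᶜ))
    (A : Set X) (hA : A.Countable) :
    ∃ g : X → ℝ, {x : X | ¬ ContinuousAt g x} = A := by
  obtain ⟨g, hg, hsupp⟩ := hA.exists_tendsto_cofinite_zero_support_eq
  refine ⟨g, ?_⟩
  ext x
  have := hX x
  rw [mem_ofPred_eq, continuousAt_iff_eq_of_tendsto_cofinite hg x, ← hsupp]
  exact Function.mem_support.symm

theorem stmt11 {X : Type*} [MetricSpace X] [CompleteSpace X] [Nonempty X]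
    (hX : ∀ x : X, Filter.NeBot (nhdsWithin x {x}ᶜ))
    (A : Set X) (hA : A.Countable) :
    ∃ g : X → ℝ, {x : X | ¬ ContinuousAt g x} = A :=
  stmt11_general hX A hA
end

section
/- Let X be a nonempty metric space without isolated points and A a countable subset with dense complement, enumerated injectively as q_1, q_2, …. Let D be a dense subset of X with dense complement. Define g : X → ℝ by g(x) = 1 for x ∉ A, g(q_n) = 1 + 1/2^n if q_n ∈ D, and g(q_n) = 1 − 1/2^n if q_n ∉ D. Then g is discontinuous exactly on A. -/
open Filter Set Topology

/-- Finitely many `q n` lie outside any neighbourhood of `c`, and a finite set is closed,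
so near a point off the range of `q` the function stays close to `c`. -/
theorem continuousAt_of_tendsto_comp_of_eq_off_range {X Y : Type*} [TopologicalSpace X]
    [T1Space X] [TopologicalSpace Y] {q : ℕ → X} {f : X → Y} {c : Y}
    (hfq : Tendsto (f ∘ q) atTop (𝓝 c)) (hf : ∀ x ∉ range q, f x = c) {x : X}
    (hx : x ∉ range q) : ContinuousAt f x := by
  rw [ContinuousAt, hf x hx]
  intro U hU
  have hfin : {n | f (q n) ∉ U}.Finite := by
    rw [← Nat.cofinite_eq_atTop] at hfq
    exact eventually_cofinite.1 (hfq hU)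
  have hxbad : x ∉ q '' {n | f (q n) ∉ U} := fun ⟨n, _, hn⟩ => hx ⟨n, hn⟩
  refine mem_map.2 (mem_of_superset
    ((hfin.image q).isClosed.isOpen_compl.mem_nhds hxbad) fun y hy => ?_)
  by_cases hyq : y ∈ range q
  · obtain ⟨n, rfl⟩ := hyq
    by_contra hn
    exact hy ⟨n, hn, rfl⟩
  · rw [mem_preimage, hf y hyq]
    exact mem_of_mem_nhds hU

theorem not_continuousAt_of_mem_closure_of_ne {X Y : Type*} [TopologicalSpace X]
    [TopologicalSpace Y] [T1Space Y] {f : X → Y} {s : Set X} {c : Y} (hs : ∀ y ∈ s, f y = c)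
    {x : X} (hx : x ∈ closure s) (hfx : f x ≠ c) : ¬ ContinuousAt f x := by
  intro hf
  have hsub : f '' s ⊆ {c} := by
    rintro _ ⟨y, hy, rfl⟩
    exact hs y hy
  have := closure_mono hsub (mem_closure_image hf hx)
  rw [closure_singleton] at this
  exact hfx this

theorem stmt17_general {X : Type*} [MetricSpace X]
    (q : ℕ → X)
    (hdense : Dense (Set.range q)ᶜ)
    (D : Set X)
    (g : X → ℝ)
    (hg1 : ∀ n : ℕ, q n ∈ D → g (q n) = 1 + 1 / 2 ^ n)
    (hg2 : ∀ n : ℕ, q n ∉ D → g (q n) = 1 - 1 / 2 ^ n)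
    (hg3 : ∀ x ∉ Set.range q, g x = 1) :
    {x : X | ¬ ContinuousAt g x} = Set.range q := by
  have hdist : ∀ n, dist (g (q n)) 1 = (1 / 2) ^ n := by
    intro n
    by_cases h : q n ∈ D
    · simp [hg1 n h]
    · simp [hg2 n h]
  have hlim : Tendsto (g ∘ q) atTop (𝓝 1) := by
    rw [tendsto_iff_dist_tendsto_zero]
    simp only [Function.comp_def, hdist]
    exact tendsto_pow_atTop_nhds_zero_of_lt_one (by norm_num) (by norm_num)
  ext x
  constructor
  · intro hx
    by_contra hxq
    exact hx (continuousAt_of_tendsto_comp_of_eq_off_range hlim hg3 hxq)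
  · rintro ⟨n, rfl⟩
    refine not_continuousAt_of_mem_closure_of_ne hg3 (hdense (q n)) fun h => ?_
    have := hdist n
    rw [h, dist_self] at this
    exact (pow_pos (by norm_num : (0 : ℝ) < 1 / 2) n).ne this

theorem stmt17 {X : Type*} [MetricSpace X] [Nonempty X]
    (hX : ∀ x : X, Filter.NeBot (nhdsWithin x {x}ᶜ))
    (q : ℕ → X) (hq : Function.Injective q)
    (hdense : Dense (Set.range q)ᶜ)
    (D : Set X) (hD : Dense D) (hDc : Dense Dᶜ)
    (g : X → ℝ)
    (hg1 : ∀ n : ℕ, q n ∈ D → g (q n) = 1 + 1 / 2 ^ n)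
    (hg2 : ∀ n : ℕ, q n ∉ D → g (q n) = 1 - 1 / 2 ^ n)
    (hg3 : ∀ x ∉ Set.range q, g x = 1) :
    {x : X | ¬ ContinuousAt g x} = Set.range q :=
  stmt17_general q hdense D g hg1 hg2 hg3
end

section
/- Every nonempty metric space without isolated points has a dense subset whose complement is also dense. -/
/-!
Call a pair `(D, E)` of disjoint sets, each contained in the closure of the other, a resolving
pair. Resolving pairs are closed under unions of chains, so Zorn's lemma gives a maximal one; its
first half is dense, for otherwise a resolving pair inside the open set it misses could be added.
In a first-countable T1 space without isolated points every nonempty open set contains a resolving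
pair: grow a countable tree of distinct points in which the children of each node converge to it,
and split the nodes by the parity of their depth.
-/

open Set Filter Topology Function

section ResolvingPair

variable {X : Type*} [TopologicalSpace X]

def IsResolvingPair (p : Set X × Set X) : Prop :=
  Disjoint p.1 p.2 ∧ p.1 ⊆ closure p.2 ∧ p.2 ⊆ closure p.1

theorem isResolvingPair_biUnion_of_isChain {c : Set (Set X × Set X)}
    (hc : ∀ p ∈ c, IsResolvingPair p) (hchain : IsChain (· ≤ ·) c) :
    IsResolvingPair (⋃ p ∈ c, p.1, ⋃ p ∈ c, p.2) := by
  refine ⟨?_, ?_, ?_⟩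
  · simp only [disjoint_iUnion₂_left, disjoint_iUnion₂_right]
    intro p hp q hq
    rcases hchain.total hp hq with h | h
    · exact (hc q hq).1.mono_right h.2
    · exact (hc p hp).1.mono_left h.1
  · exact iUnion₂_subset fun p hp =>
      (hc p hp).2.1.trans (closure_mono (subset_biUnion_of_mem (u := Prod.snd) hp))
  · exact iUnion₂_subset fun p hp =>
      (hc p hp).2.2.trans (closure_mono (subset_biUnion_of_mem (u := Prod.fst) hp))

theorem IsResolvingPair.union {p q : Set X × Set X} (hp : IsResolvingPair p)
    (hq : IsResolvingPair q) (hqp : q.1 ∪ q.2 ⊆ (closure p.1)ᶜ) :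
    IsResolvingPair (p.1 ∪ q.1, p.2 ∪ q.2) := by
  have hq₁ : q.1 ⊆ (closure p.1)ᶜ := subset_union_left.trans hqp
  have hq₂ : q.2 ⊆ (closure p.1)ᶜ := subset_union_right.trans hqp
  refine ⟨?_, ?_, ?_⟩
  · simp only [disjoint_union_left, disjoint_union_right]
    refine ⟨⟨hp.1, ?_⟩, ?_, hq.1⟩
    · exact (disjoint_compl_right.mono hp.2.2 hq₁).symm
    · exact disjoint_compl_right.mono subset_closure hq₂
  · rw [closure_union]
    exact union_subset_union hp.2.1 hq.2.1
  · rw [closure_union]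
    exact union_subset_union hp.2.2 hq.2.2

theorem isResolvingPair_image_of_tendsto {s : ℕ → X} (hs : Injective s) {color : ℕ → Bool}
    {child : ℕ → ℕ → ℕ} (hcolor : ∀ p c, color (child p c) = !color p)
    (hlim : ∀ p, Tendsto (fun c => s (child p c)) atTop (𝓝 (s p))) :
    IsResolvingPair (s '' {k | color k = false}, s '' {k | color k = true}) := by
  have hmem : ∀ p, s p ∈ closure (s '' {k | color k = !color p}) := fun p =>
    mem_closure_of_tendsto (hlim p) (Eventually.of_forall fun c => mem_image_of_mem s (hcolor p c))
  refine ⟨(disjoint_image_iff hs).2 (disjoint_left.2 fun k h₁ h₂ => by simp_all), ?_, ?_⟩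
  · rintro _ ⟨p, hp : color p = false, rfl⟩
    simpa [hp] using hmem p
  · rintro _ ⟨p, hp : color p = true, rfl⟩
    simpa [hp] using hmem p

theorem exists_dense_dense_compl_of_exists_isResolvingPair
    (h : ∀ U : Set X, IsOpen U → U.Nonempty →
      ∃ q : Set X × Set X, IsResolvingPair q ∧ q.1.Nonempty ∧ q.1 ∪ q.2 ⊆ U) :
    ∃ D : Set X, Dense D ∧ Dense Dᶜ := by
  obtain ⟨m, hm⟩ := zorn_le₀ {p : Set X × Set X | IsResolvingPair p} fun c hc hchain =>
    ⟨_, isResolvingPair_biUnion_of_isChain hc hchain, fun p hp =>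
      ⟨subset_biUnion_of_mem (u := Prod.fst) hp, subset_biUnion_of_mem (u := Prod.snd) hp⟩⟩
  have hdense : Dense m.1 := by
    by_contra hnd
    have hU : (closure m.1)ᶜ.Nonempty := by
      rwa [nonempty_compl, Ne, ← dense_iff_closure_eq]
    obtain ⟨q, hq, ⟨y, hy⟩, hqU⟩ := h _ isClosed_closure.isOpen_compl hU
    have hle := hm.2 (hm.1.union hq hqU) ⟨subset_union_left, subset_union_left⟩
    exact hqU (subset_union_left hy) (subset_closure (hle.1 (subset_union_right hy)))
  exact ⟨m.1, hdense, (hdense.mono hm.1.2.1).of_closure.mono hm.1.1.subset_compl_left⟩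

end ResolvingPair

section Tree

open Nat

/-- Node `k + 1` of the tree is the `(unpair k).2`-th child of node `(unpair k).1 ≤ k`, so every
node has infinitely many children, all with larger index. -/
def treeParity : ℕ → Bool
  | 0 => false
  | k + 1 => !treeParity (unpair k).1
decreasing_by exact Nat.lt_succ_of_le (unpair_left_le k)

variable {X : Type*} (next : X → ℕ → Set X → X) (x : X)

noncomputable def treeSeq : ℕ → X
  | 0 => x
  | k + 1 => next (treeSeq (unpair k).1) (unpair k).2 (range fun i : Fin (k + 1) => treeSeq i)
decreasing_by
  · exact Nat.lt_succ_of_le (unpair_left_le k)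
  · exact i.isLt

variable {next x} {U : Set X} {V : X → ℕ → Set X}
  (hnext : ∀ y ∈ U, ∀ c F, F.Finite → next y c F ∈ (V y c ∩ U) \ F) (hx : x ∈ U)
include hnext hx

theorem treeSeq_mem (n : ℕ) : treeSeq next x n ∈ U := by
  induction n using Nat.strong_induction_on with
  | _ n ih =>
    cases n with
    | zero => rw [treeSeq]; exact hx
    | succ k =>
      rw [treeSeq]
      exact (hnext _ (ih _ (Nat.lt_succ_of_le (unpair_left_le k))) _ _ (finite_range _)).1.2

theorem treeSeq_succ_mem (k : ℕ) :
    treeSeq next x (k + 1) ∈ V (treeSeq next x (unpair k).1) (unpair k).2 \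
      range fun i : Fin (k + 1) => treeSeq next x i := by
  rw [treeSeq]
  have h := hnext _ (treeSeq_mem hnext hx (unpair k).1) (unpair k).2 _
    (finite_range fun i : Fin (k + 1) => treeSeq next x i)
  exact ⟨h.1.1, h.2⟩

theorem treeSeq_injective : Injective (treeSeq next x) := by
  have hlt : ∀ i j, i < j → treeSeq next x j ≠ treeSeq next x i := by
    rintro i (_ | k) hij
    · omega
    · exact fun h => (treeSeq_succ_mem hnext hx k).2 ⟨⟨i, hij⟩, h.symm⟩
  intro i j h
  rcases lt_trichotomy i j with hij | rfl | hji
  · exact absurd h.symm (hlt i j hij)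
  · rfl
  · exact absurd h (hlt j i hji)

end Tree

theorem exists_isResolvingPair_subset {X : Type*} [TopologicalSpace X] [T1Space X]
    [FirstCountableTopology X] (hX : ∀ x : X, (𝓝[≠] x).NeBot) {U : Set X} (hU : IsOpen U)
    (hne : U.Nonempty) : ∃ q : Set X × Set X, IsResolvingPair q ∧ q.1.Nonempty ∧ q.1 ∪ q.2 ⊆ U := by
  obtain ⟨x, hx⟩ := hne
  choose V hV using fun y : X => (𝓝 y).exists_antitone_basis
  have hchoice : ∀ y c (F : Set X), ∃ z, y ∈ U → F.Finite → z ∈ (V y c ∩ U) \ F := by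
    intro y c F
    by_cases h : y ∈ U ∧ F.Finite
    · have hnhds : V y c ∩ U ∈ 𝓝 y := inter_mem ((hV y).mem c) (hU.mem_nhds h.1)
      obtain ⟨z, hz⟩ := ((infinite_of_mem_nhds y hnhds).sdiff h.2).nonempty
      exact ⟨z, fun _ _ => hz⟩
    · exact ⟨y, fun hy hF => (h ⟨hy, hF⟩).elim⟩
  choose next hnext using hchoice
  have hnext' : ∀ y ∈ U, ∀ c F, F.Finite → next y c F ∈ (V y c ∩ U) \ F :=
    fun y hy c F hF => hnext y c F hy hF
  refine ⟨_, isResolvingPair_image_of_tendsto (treeSeq_injective hnext' hx)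
    (child := fun p c => Nat.pair p c + 1) (color := treeParity) (fun p c => ?_) (fun p => ?_),
    ⟨x, 0, ?_, ?_⟩, ?_⟩
  · rw [treeParity, Nat.unpair_pair]
  · refine (hV _).tendsto fun c => ?_
    simpa using (treeSeq_succ_mem hnext' hx (Nat.pair p c)).1
  · change treeParity 0 = false
    rw [treeParity]
  · rw [treeSeq]
  · rintro _ (⟨k, -, rfl⟩ | ⟨k, -, rfl⟩) <;> exact treeSeq_mem hnext' hx k

theorem stmt18_general {X : Type*} [MetricSpace X]
    (hX : ∀ x : X, Filter.NeBot (nhdsWithin x {x}ᶜ)) :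
    ∃ D : Set X, Dense D ∧ Dense Dᶜ :=
  exists_dense_dense_compl_of_exists_isResolvingPair fun _ hU hne =>
    exists_isResolvingPair_subset hX hU hne

theorem stmt18 {X : Type*} [MetricSpace X] [Nonempty X]
    (hX : ∀ x : X, Filter.NeBot (nhdsWithin x {x}ᶜ)) :
    ∃ D : Set X, Dense D ∧ Dense Dᶜ :=
  stmt18_general hX
end
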